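/- arXiv:2010.15089 — 4 statements merged into one kernel-verified Lean document; each statement's English description precedes it below -/
import Mathlib

section
/- Let n ≥ 1, Ω ⊆ 𝕆_sⁿ and f : Ω → 𝕆. The following are equivalent: (i) f is a slice function; (ii) (stem function form) there exists F = (F₁,F₂) : Ω_{s₁} → 𝕆² such that f(x+yI) = F₁(x,y) + I·F₂(x,y) for every (x,y) ∈ Ω_{s₁} and every I ∈ 𝕊 with x+yI ∈ Ω; (iii) (linear form for I) for every (x,y) ∈ ℝⁿ×ℝⁿ and all I,J,K ∈ 𝕊 with J ≠ K and x+yI, x+yJ, x+yK ∈ Ω, f(x+yI) = (J−K)⁻¹·(J·f(x+yJ) − K·f(x+yK)) + I·((J−K)⁻¹·(f(x+yJ) − f(x+yK))); (iv) (linear form for f) for every (x,y) ∈ ℝⁿ×ℝⁿ and all I,J,K ∈ 𝕊 with J ≠ K and x+yI, x+yJ, x+yK ∈ Ω, f(x+yI) = (I−K)·((J−K)⁻¹·f(x+yJ)) + (I−J)·((K−J)⁻¹·f(x+yK)). (All products are octonion products with exactly the parenthesization written; 𝕆 is non-associative.) -/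
/-! Octonions via the Cayley–Dickson construction on the quaternions,
the n-dimensional quadratic cone, the slice topology, and slice regularity. -/

noncomputable section
open Quaternion Topology

/-- The octonions, as `ℍ × ℍ` with the (L²) Euclidean norm and
Cayley–Dickson multiplication. -/
abbrev Oct : Type := WithLp 2 (ℍ × ℍ)

namespace Oct

def c1 (p : Oct) : ℍ := (WithLp.equiv 2 (ℍ × ℍ) p).1
def c2 (p : Oct) : ℍ := (WithLp.equiv 2 (ℍ × ℍ) p).2
def mk (a b : ℍ) : Oct := (WithLp.equiv 2 (ℍ × ℍ)).symm (a, b)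

instance : One Oct := ⟨mk 1 0⟩

/-- Cayley–Dickson multiplication. -/
instance : Mul Oct :=
  ⟨fun p q => mk (c1 p * c1 q - star (c2 q) * c2 p) (c2 q * c1 p + c2 p * star (c1 q))⟩

/-- Octonionic conjugation. -/
instance : Star Oct := ⟨fun p => mk (star (c1 p)) (-(c2 p))⟩

/-- Inverse: `p⁻¹ = ‖p‖⁻² • (star p)` (so `0⁻¹ = 0`). -/
instance : Inv Oct := ⟨fun p => (‖p‖ ^ 2)⁻¹ • star p⟩

/-- The real inner product on `𝕆 ≅ ℝ⁸`, via polarization. -/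
def oinner (p q : Oct) : ℝ := (1 / 4) * (‖p + q‖ ^ 2 - ‖p - q‖ ^ 2)

/-- The sphere `𝕊` of imaginary units of the octonions. -/
def Sph : Set Oct := {I | I * I = -1}

/-- The slice complex plane `ℂ_I = ℝ + ℝ I ⊆ 𝕆`. -/
def CI (I : Oct) : Set Oct := {z | ∃ s t : ℝ, z = s • (1 : Oct) + t • I}

end Oct

open Oct

/-- The point `x + y I ∈ ℂ_Iⁿ ⊆ 𝕆ⁿ`. -/
def aff {n : ℕ} (x y : Fin n → ℝ) (I : Oct) : Fin n → Oct :=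
  fun m => x m • (1 : Oct) + y m • I

/-- The embedding `ℝⁿ ⊆ 𝕆ⁿ`. -/
def ofRealn {n : ℕ} (x : Fin n → ℝ) : Fin n → Oct := fun m => x m • (1 : Oct)

/-- The slice `ℂ_Iⁿ ⊆ 𝕆ⁿ`. -/
def slicen (n : ℕ) (I : Oct) : Set (Fin n → Oct) := {q | ∃ x y : Fin n → ℝ, q = aff x y I}

/-- The `n`-dimensional quadratic cone `𝕆ₛⁿ = ⋃_{I ∈ 𝕊} ℂ_Iⁿ`. -/
def cone (n : ℕ) : Set (Fin n → Oct) := ⋃ I ∈ Sph, slicen n I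

/-- The slice topology `τ_s`: a set is open iff its trace on every slice `ℂ_Iⁿ`
is open (expressed via the canonical parametrizations `(x,y) ↦ x + yI`). -/
def τs (n : ℕ) : TopologicalSpace (Fin n → Oct) :=
  ⨆ I : Sph, TopologicalSpace.coinduced
    (fun p : (Fin n → ℝ) × (Fin n → ℝ) => aff p.1 p.2 I.1) inferInstance

/-- A slice-open subset of the quadratic cone. -/
def SliceOpen (n : ℕ) (Ω : Set (Fin n → Oct)) : Prop :=
  Ω ⊆ cone n ∧ IsOpen[τs n] Ω

/-- A slice-domain: a nonempty slice-connected slice-open subset of the cone. -/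
def SliceDomain (n : ℕ) (Ω : Set (Fin n → Oct)) : Prop :=
  SliceOpen n Ω ∧ @IsConnected _ (τs n) Ω

/-- Real-connectedness: `Ω ∩ ℝⁿ` is a (pre)connected subset of `ℝⁿ`. -/
def RealConnected (n : ℕ) (Ω : Set (Fin n → Oct)) : Prop :=
  IsPreconnected {x : Fin n → ℝ | ofRealn x ∈ Ω}

/-- Axially symmetric subsets of the cone. -/
def AxSymm (n : ℕ) (Ω : Set (Fin n → Oct)) : Prop :=
  ∀ (x y : Fin n → ℝ), ∀ I ∈ Sph, ∀ J ∈ Sph, aff x y I ∈ Ω → aff x y J ∈ Ω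

/-- The upper half-space `ℝ²ⁿ₊`: pairs `(x,y)` with `y = 0` or the first
nonzero coordinate of `y` positive. -/
def pos2n (n : ℕ) : Set ((Fin n → ℝ) × (Fin n → ℝ)) :=
  {p | p.2 = 0 ∨ ∃ m : Fin n, 0 < p.2 m ∧ ∀ k : Fin n, k < m → p.2 k = 0}

/-- `Ω_{s₁}`. -/
def s1 {n : ℕ} (Ω : Set (Fin n → Oct)) : Set ((Fin n → ℝ) × (Fin n → ℝ)) :=
  {p | ∃ I ∈ Sph, aff p.1 p.2 I ∈ Ω}

/-- `Ω_{s₂}`. -/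
def s2 {n : ℕ} (Ω : Set (Fin n → Oct)) : Set ((Fin n → ℝ) × (Fin n → ℝ)) :=
  {p | ∃ J ∈ Sph, ∃ K ∈ Sph, J ≠ K ∧ aff p.1 p.2 J ∈ Ω ∧ aff p.1 p.2 K ∈ Ω}

/-- Slice functions: induced on `Ω_{s₂}⁺` by a pair `(F₁, F₂)` via
`f(x + yI) = F₁(x,y) + I·F₂(x,y)`. -/
def IsSliceFun (n : ℕ) (Ω : Set (Fin n → Oct)) (f : (Fin n → Oct) → Oct) : Prop :=
  ∃ F₁ F₂ : (Fin n → ℝ) × (Fin n → ℝ) → Oct,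
    ∀ x y : Fin n → ℝ, (x, y) ∈ s2 Ω ∩ pos2n n → ∀ I ∈ Sph, aff x y I ∈ Ω →
      f (aff x y I) = F₁ (x, y) + I * F₂ (x, y)

/-- Holomorphy of a function of `n` slice variables, read through the
parametrization `(x,y) ↦ x + yI`: continuous partial derivatives (i.e. `C¹`)
and the Cauchy–Riemann equations `(∂/∂xₘ + I ∂/∂yₘ) g = 0` on `U`. -/
def Holo (n : ℕ) (I : Oct) (g : (Fin n → ℝ) × (Fin n → ℝ) → Oct)
    (U : Set ((Fin n → ℝ) × (Fin n → ℝ))) : Prop :=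
  ContDiffOn ℝ 1 g U ∧
  ∀ p ∈ U, ∀ m : Fin n,
    fderiv ℝ g p (Pi.single m 1, 0) + I * fderiv ℝ g p (0, Pi.single m 1) = 0

/-- Weak slice regularity: each restriction `f|_{Ω ∩ ℂ_Iⁿ}` is holomorphic. -/
def WSliceReg (n : ℕ) (Ω : Set (Fin n → Oct)) (f : (Fin n → Oct) → Oct) : Prop :=
  ∀ I ∈ Sph, Holo n I (fun p => f (aff p.1 p.2 I)) {p | aff p.1 p.2 I ∈ Ω}

/-- The complex structure `σ(a,b) = (−b,a)` on `𝕆²`. -/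
def sigma2 : Oct × Oct → Oct × Oct := fun w => (-w.2, w.1)

/-- Holomorphic stem maps: `F : V → 𝕆²` extends to a `C¹` map `G` on an open
neighborhood `U ⊇ V` satisfying `(∂/∂xₘ + σ ∂/∂yₘ) G = 0` on `U`. -/
def StemHolo (n : ℕ) (V : Set ((Fin n → ℝ) × (Fin n → ℝ)))
    (F : (Fin n → ℝ) × (Fin n → ℝ) → Oct × Oct) : Prop :=
  ∃ (U : Set ((Fin n → ℝ) × (Fin n → ℝ))) (G : (Fin n → ℝ) × (Fin n → ℝ) → Oct × Oct),
    IsOpen U ∧ V ⊆ U ∧ Set.EqOn G F V ∧ ContDiffOn ℝ 1 G U ∧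
    ∀ p ∈ U, ∀ m : Fin n,
      fderiv ℝ G p (Pi.single m 1, 0) + sigma2 (fderiv ℝ G p (0, Pi.single m 1)) = 0

/-- Strong slice regularity: `f` is induced by a holomorphic stem map on `Ω_{s₁}`. -/
def SSliceReg (n : ℕ) (Ω : Set (Fin n → Oct)) (f : (Fin n → Oct) → Oct) : Prop :=
  ∃ F : (Fin n → ℝ) × (Fin n → ℝ) → Oct × Oct, StemHolo n (s1 Ω) F ∧
    ∀ x y : Fin n → ℝ, ∀ I ∈ Sph, aff x y I ∈ Ω →
      f (aff x y I) = (F (x, y)).1 + I * (F (x, y)).2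

/-- An s-basis `{I, J, K}` of the octonions. -/
def IsSBasis (I J K : Oct) : Prop :=
  I ∈ Sph ∧ J ∈ Sph ∧ K ∈ Sph ∧
  LinearIndependent ℝ ![(1 : Oct), I, J, I * J, K, J * K, I * K, (I * J) * K] ∧
  Submodule.span ℝ (Set.range ![(1 : Oct), I, J, I * J, K, J * K, I * K, (I * J) * K]) = ⊤

/-- Iterated left multiplication `L_w^β = (L_{w₁})^{β₁} ∘ ⋯ ∘ (L_{wₙ})^{βₙ}`. -/
def Lpow {n : ℕ} (w : Fin n → Oct) (β : Fin n → ℕ) : Oct → Oct :=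
  fun a => (List.finRange n).foldr (fun ℓ c => (fun o => w ℓ * o)^[β ℓ] c) a

/-- The `*`-power `(q − p)^{*α} a = ∑_{β ≤ α} C(α,β) L_q^β (L_{−p}^{α−β} a)`. -/
def starPow {n : ℕ} (p : Fin n → Oct) (α : Fin n → ℕ) (a : Oct) (q : Fin n → Oct) : Oct :=
  ∑ β ∈ Finset.Iic α, (∏ ℓ, (α ℓ).choose (β ℓ)) • Lpow q β (Lpow (-p) (α - β) a)

/-- The `ℓ`-th slice derivative `∂_ℓ f (x + w) = (∂/∂x_ℓ) f (x + w)`. -/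
def sderiv {n : ℕ} (ℓ : Fin n) (f : (Fin n → Oct) → Oct) : (Fin n → Oct) → Oct :=
  fun q => deriv (fun t : ℝ => f (fun m => q m + (if m = ℓ then t else 0) • (1 : Oct))) 0

/-- The iterated slice derivative `f^{(α)} = (∂₁)^{α₁} ⋯ (∂ₙ)^{αₙ} f`. -/
def sderivMulti {n : ℕ} (α : Fin n → ℕ) (f : (Fin n → Oct) → Oct) : (Fin n → Oct) → Oct :=
  (List.finRange n).foldr (fun ℓ g => (sderiv ℓ)^[α ℓ] g) f

/-- The slice-polydisc `P̃(q₀, r)` (relative to `I ∈ 𝕊` with `q₀ ∈ ℂ_Iⁿ`):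
points `x + yJ` with `x ± yI` in the closed polydisc `P_I(q₀, r)`. -/
def polyDisc {n : ℕ} (q₀ : Fin n → Oct) (I : Oct) (r : Fin n → ℝ) : Set (Fin n → Oct) :=
  {q | ∃ x y : Fin n → ℝ, ∃ J ∈ Sph, q = aff x y J ∧
        (∀ ℓ, ‖aff x y I ℓ - q₀ ℓ‖ ≤ r ℓ) ∧ (∀ ℓ, ‖aff x (-y) I ℓ - q₀ ℓ‖ ≤ r ℓ)}

/-!
Over a fixed `(x, y)`, a slice function restricted to the points `x + yL` of `Ω` has the form
`L ↦ A + L B` (when `(x, y)` is not positive, use `x + yL = x + (-y)(-L)`). Such a function is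
recovered from its values `u, v` at two distinct units `J, K`: since `J (J w) = -w`, one has
`J u - K v = (J - K) A` and `u - v = (J - K) B`, and `J - K` has a left inverse, which is a real
multiple of `J - K` because imaginary units satisfy `star J = -J`. This is the linear form for `I`;
expanding the inverse turns it into the linear form for `f`. Conversely, the linear form for `I`
defines `A` and `B` over every `(x, y)` above which `Ω` meets two slices, and all other fibres
have at most one point.
-/

theorem Quaternion.re_eq_zero_of_mul_self_eq_neg_one {q : ℍ} (h : q * q = -1) :
    q.re = 0 := by
  have hq : normSq q = 1 := by
    have h' := congrArg normSq h
    rw [map_mul, normSq_neg, map_one] at h'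
    nlinarith [normSq_nonneg (a := q)]
  rw [← Quaternion.sq_eq_neg_normSq, hq, sq, h]
  simp

namespace Oct

theorem ext {p q : Oct} (h₁ : c1 p = c1 q) (h₂ : c2 p = c2 q) : p = q :=
  (WithLp.equiv 2 (ℍ × ℍ)).injective (Prod.ext h₁ h₂)

@[simp] theorem c1_add (p q : Oct) : c1 (p + q) = c1 p + c1 q := rfl
@[simp] theorem c2_add (p q : Oct) : c2 (p + q) = c2 p + c2 q := rfl
@[simp] theorem c1_neg (p : Oct) : c1 (-p) = -c1 p := rfl
@[simp] theorem c2_neg (p : Oct) : c2 (-p) = -c2 p := rfl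
@[simp] theorem c1_smul (r : ℝ) (p : Oct) : c1 (r • p) = r • c1 p := rfl
@[simp] theorem c2_smul (r : ℝ) (p : Oct) : c2 (r • p) = r • c2 p := rfl
@[simp] theorem c1_zero : c1 (0 : Oct) = 0 := rfl
@[simp] theorem c2_zero : c2 (0 : Oct) = 0 := rfl
@[simp] theorem c1_one : c1 (1 : Oct) = 1 := rfl
@[simp] theorem c2_one : c2 (1 : Oct) = 0 := rfl
@[simp] theorem c1_mul (p q : Oct) : c1 (p * q) = c1 p * c1 q - star (c2 q) * c2 p := rfl
@[simp] theorem c2_mul (p q : Oct) : c2 (p * q) = c2 q * c1 p + c2 p * star (c1 q) := rfl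
@[simp] theorem c1_star (p : Oct) : c1 (star p) = star (c1 p) := rfl
@[simp] theorem c2_star (p : Oct) : c2 (star p) = -c2 p := rfl

end Oct

section

-- Local: globally, `+` and `-` on `Oct` would elaborate through it instead of `WithLp`'s group.
local instance : NonAssocRing Oct :=
  { (inferInstance : AddCommGroup Oct) with
    left_distrib _ _ _ := by
      apply Oct.ext <;> simp only [c1_mul, c2_mul, c1_add, c2_add, star_add, mul_add, add_mul] <;>
        abel
    right_distrib _ _ _ := by
      apply Oct.ext <;> simp only [c1_mul, c2_mul, c1_add, c2_add, mul_add, add_mul] <;> abel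
    zero_mul _ := Oct.ext (by simp) (by simp)
    mul_zero _ := Oct.ext (by simp) (by simp)
    one_mul _ := Oct.ext (by simp) (by simp)
    mul_one _ := Oct.ext (by simp) (by simp) }

instance : IsScalarTower ℝ Oct Oct :=
  ⟨fun _ _ _ => Oct.ext (by simp [smul_sub]) (by simp)⟩

instance : SMulCommClass ℝ Oct Oct :=
  ⟨fun _ _ _ => Oct.ext (by simp [smul_sub]) (by simp)⟩

instance : StarAddMonoid Oct where
  star_involutive _ := Oct.ext (star_star _) (neg_neg _)
  star_add _ _ := Oct.ext (star_add _ _) (neg_add _ _)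

namespace Oct

theorem norm_sq_eq_normSq_add_normSq (p : Oct) : ‖p‖ ^ 2 = normSq (c1 p) + normSq (c2 p) := by
  rw [WithLp.prod_norm_sq_eq_of_L2, Quaternion.normSq_eq_norm_mul_self,
    Quaternion.normSq_eq_norm_mul_self, sq, sq]
  rfl

theorem star_mul_mul_self (a b : Oct) : star a * (a * b) = ‖a‖ ^ 2 • b := by
  rw [norm_sq_eq_normSq_add_normSq]
  refine ext ?_ ?_
  · calc c1 (star a * (a * b))
        = star (c1 a) * c1 a * c1 b + c1 b * (star (c2 a) * c2 a) := by
          simp only [c1_mul, c2_mul, c1_star, c2_star, star_add, star_mul, star_star]; noncomm_ring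
      _ = _ := by
          rw [Quaternion.star_mul_self, Quaternion.star_mul_self, Quaternion.coe_mul_eq_smul,
            Quaternion.mul_coe_eq_smul, c1_smul, add_smul]
  · calc c2 (star a * (a * b))
        = c2 b * (c1 a * star (c1 a)) + c2 a * star (c2 a) * c2 b := by
          simp only [c1_mul, c2_mul, c1_star, c2_star, star_mul, star_star, star_sub]; noncomm_ring
      _ = _ := by
          rw [Quaternion.self_mul_star, Quaternion.self_mul_star, Quaternion.coe_mul_eq_smul,
            Quaternion.mul_coe_eq_smul, c2_smul, add_smul, add_comm]

theorem inv_mul_mul_cancel {a : Oct} (ha : a ≠ 0) (b : Oct) : a⁻¹ * (a * b) = b := by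
  show ((‖a‖ ^ 2)⁻¹ • star a) * (a * b) = b
  rw [smul_mul_assoc, star_mul_mul_self, smul_smul, inv_mul_cancel₀ (by positivity), one_smul]

theorem star_eq_neg_of_mem_Sph {I : Oct} (hI : I ∈ Sph) : star I = -I := by
  have hII : I * I = -1 := hI
  have h₂ := congrArg c2 hII
  simp only [c2_mul, c2_neg, c2_one, neg_zero, ← mul_add, Quaternion.self_add_star'] at h₂
  have hre : (c1 I).re = 0 := by
    rcases mul_eq_zero.mp h₂ with h | h
    · exact Quaternion.re_eq_zero_of_mul_self_eq_neg_one (by simpa [h] using congrArg c1 hII)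
    · have h' : 2 * (c1 I).re = 0 := Quaternion.coe_injective h
      linarith
  exact ext (Quaternion.star_eq_neg.mpr hre) rfl

theorem norm_sq_eq_one_of_mem_Sph {I : Oct} (hI : I ∈ Sph) : ‖I‖ ^ 2 = 1 := by
  have h := star_mul_mul_self I 1
  rw [mul_one, star_eq_neg_of_mem_Sph hI, neg_mul, show I * I = -1 from hI, neg_neg] at h
  have h₁ := congrArg (fun p => (c1 p).re) h
  simp only [c1_one, c1_smul, Quaternion.re_smul, Quaternion.re_one, smul_eq_mul, mul_one] at h₁
  exact h₁.symm

theorem mul_mul_self_of_mem_Sph {I : Oct} (hI : I ∈ Sph) (b : Oct) : I * (I * b) = -b := by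
  have h := star_mul_mul_self I b
  rwa [star_eq_neg_of_mem_Sph hI, norm_sq_eq_one_of_mem_Sph hI, one_smul, neg_mul,
    neg_eq_iff_eq_neg] at h

theorem neg_mem_Sph {I : Oct} (hI : I ∈ Sph) : -I ∈ Sph := by
  show -I * -I = -1
  rw [neg_mul_neg]
  exact hI

theorem inv_sub_of_mem_Sph {J K : Oct} (hJ : J ∈ Sph) (hK : K ∈ Sph) :
    (J - K)⁻¹ = -(‖J - K‖ ^ 2)⁻¹ • (J - K) := by
  show (‖J - K‖ ^ 2)⁻¹ • star (J - K) = _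
  rw [star_sub, star_eq_neg_of_mem_Sph hJ, star_eq_neg_of_mem_Sph hK, neg_smul, ← smul_neg,
    neg_sub_neg, neg_sub]

end Oct

/-- The linear form for `I`: the value at `I` of the function `L ↦ A + L B` taking the values
`u` at `J` and `v` at `K`. -/
def linFormI (I J K u v : Oct) : Oct := (J - K)⁻¹ * (J * u - K * v) + I * ((J - K)⁻¹ * (u - v))

def linFormF (I J K u v : Oct) : Oct := (I - K) * ((J - K)⁻¹ * u) + (I - J) * ((K - J)⁻¹ * v)

theorem linFormI_add_mul {J K : Oct} (hJ : J ∈ Sph) (hK : K ∈ Sph) (hJK : J ≠ K) (I A B : Oct) :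
    linFormI I J K (A + J * B) (A + K * B) = A + I * B := by
  have hJK' : J - K ≠ 0 := sub_ne_zero.mpr hJK
  have h₁ : J * (A + J * B) - K * (A + K * B) = (J - K) * A := by
    simp only [mul_add, mul_mul_self_of_mem_Sph hJ, mul_mul_self_of_mem_Sph hK, sub_mul]
    abel
  have h₂ : A + J * B - (A + K * B) = (J - K) * B := by
    rw [sub_mul]
    abel
  rw [linFormI, h₁, h₂, inv_mul_mul_cancel hJK', inv_mul_mul_cancel hJK']

theorem linFormI_eq_linFormF {J K : Oct} (hJ : J ∈ Sph) (hK : K ∈ Sph) (I u v : Oct) :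
    linFormI I J K u v = linFormF I J K u v := by
  have key : (J - K) * (J * u - K * v) + I * ((J - K) * (u - v)) =
      (I - K) * ((J - K) * u) - (I - J) * ((J - K) * v) := by
    simp only [mul_sub, sub_mul, mul_mul_self_of_mem_Sph hJ, mul_mul_self_of_mem_Sph hK]
    abel
  rw [linFormI, linFormF, inv_sub_of_mem_Sph hJ hK, inv_sub_of_mem_Sph hK hJ, norm_sub_rev K J,
    show K - J = -(J - K) by abel]
  simp only [smul_mul_assoc, mul_smul_comm, neg_mul, mul_neg, ← smul_add]
  rw [key, ← sub_eq_add_neg]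

section Stem

variable {n : ℕ} {Ω : Set (Fin n → Oct)} {f : (Fin n → Oct) → Oct} {x y : Fin n → ℝ}

theorem aff_neg_neg (I : Oct) : aff x (-y) (-I) = aff x y I := by
  funext m
  simp [aff]

theorem mem_pos2n_or_neg_mem_pos2n (x y : Fin n → ℝ) :
    (x, y) ∈ pos2n n ∨ (x, -y) ∈ pos2n n := by
  by_cases hy : y = 0
  · exact Or.inl (Or.inl hy)
  obtain ⟨m, hm, hmin⟩ := wellFounded_lt.has_min {k | y k ≠ 0} (Function.ne_iff.mp hy)
  have hbelow : ∀ k, k < m → y k = 0 := fun k hk => not_not.mp fun h => hmin k h hk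
  rcases (Ne.lt_or_gt hm) with hneg | hpos
  · exact Or.inr (Or.inr ⟨m, by simpa using hneg, fun k hk => by simp [hbelow k hk]⟩)
  · exact Or.inl (Or.inr ⟨m, hpos, hbelow⟩)

theorem s2_subset_s1 : s2 Ω ⊆ s1 Ω :=
  fun _ ⟨J, hJ, _, _, _, hJΩ, _⟩ => ⟨J, hJ, hJΩ⟩

theorem neg_mem_s2 (h : (x, y) ∈ s2 Ω) :
    (x, -y) ∈ s2 Ω := by
  obtain ⟨J, hJ, K, hK, hJK, hJΩ, hKΩ⟩ := h
  exact ⟨-J, neg_mem_Sph hJ, -K, neg_mem_Sph hK, neg_injective.ne hJK,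
    by rwa [aff_neg_neg], by rwa [aff_neg_neg]⟩

def HasStemAt (Ω : Set (Fin n → Oct)) (f : (Fin n → Oct) → Oct) (x y : Fin n → ℝ) : Prop :=
  ∃ A B : Oct, ∀ L ∈ Sph, aff x y L ∈ Ω → f (aff x y L) = A + L * B

theorem HasStemAt.of_neg (h : HasStemAt Ω f x (-y)) : HasStemAt Ω f x y := by
  obtain ⟨A, B, hAB⟩ := h
  refine ⟨A, -B, fun L hL hLΩ => ?_⟩
  rw [← aff_neg_neg, hAB (-L) (neg_mem_Sph hL) (by rwa [aff_neg_neg]), neg_mul, mul_neg]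

theorem HasStemAt.eq_linFormI (h : HasStemAt Ω f x y) {I J K : Oct} (hI : I ∈ Sph) (hJ : J ∈ Sph)
    (hK : K ∈ Sph) (hJK : J ≠ K) (hIΩ : aff x y I ∈ Ω) (hJΩ : aff x y J ∈ Ω)
    (hKΩ : aff x y K ∈ Ω) :
    f (aff x y I) = linFormI I J K (f (aff x y J)) (f (aff x y K)) := by
  obtain ⟨A, B, hAB⟩ := h
  rw [hAB I hI hIΩ, hAB J hJ hJΩ, hAB K hK hKΩ, linFormI_add_mul hJ hK hJK]

theorem hasStemAt_of_not_mem_s2 (h : (x, y) ∉ s2 Ω) : HasStemAt Ω f x y := by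
  by_cases hs1 : (x, y) ∈ s1 Ω
  · obtain ⟨I₀, hI₀, hI₀Ω⟩ := hs1
    refine ⟨f (aff x y I₀), 0, fun L hL hLΩ => ?_⟩
    obtain rfl : L = I₀ := by_contra fun hne => h ⟨L, hL, I₀, hI₀, hne, hLΩ, hI₀Ω⟩
    rw [mul_zero, add_zero]
  · exact ⟨0, 0, fun L hL hLΩ => (hs1 ⟨L, hL, hLΩ⟩).elim⟩

theorem IsSliceFun.hasStemAt (hf : IsSliceFun n Ω f) (hxy : (x, y) ∈ s2 Ω) :
    HasStemAt Ω f x y := by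
  obtain ⟨F₁, F₂, hF⟩ := hf
  rcases mem_pos2n_or_neg_mem_pos2n x y with hpos | hneg
  · exact ⟨F₁ (x, y), F₂ (x, y), hF x y ⟨hxy, hpos⟩⟩
  · exact HasStemAt.of_neg ⟨F₁ (x, -y), F₂ (x, -y), hF x (-y) ⟨neg_mem_s2 hxy, hneg⟩⟩

theorem hasStemAt_of_eq_linFormI
    (h : ∀ I ∈ Sph, ∀ J ∈ Sph, ∀ K ∈ Sph, J ≠ K → aff x y I ∈ Ω → aff x y J ∈ Ω →
      aff x y K ∈ Ω → f (aff x y I) = linFormI I J K (f (aff x y J)) (f (aff x y K))) :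
    HasStemAt Ω f x y := by
  by_cases hs2 : (x, y) ∈ s2 Ω
  · obtain ⟨J, hJ, K, hK, hJK, hJΩ, hKΩ⟩ := hs2
    exact ⟨_, _, fun I hI hIΩ => h I hI J hJ K hK hJK hIΩ hJΩ hKΩ⟩
  · exact hasStemAt_of_not_mem_s2 hs2

end Stem

end

theorem slice_function_tfae_general (n : ℕ) (Ω : Set (Fin n → Oct)) (f : (Fin n → Oct) → Oct) :
    [IsSliceFun n Ω f,
     ∃ F₁ F₂ : (Fin n → ℝ) × (Fin n → ℝ) → Oct,
       ∀ x y : Fin n → ℝ, (x, y) ∈ s1 Ω → ∀ I ∈ Sph, aff x y I ∈ Ω →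
         f (aff x y I) = F₁ (x, y) + I * F₂ (x, y),
     ∀ (x y : Fin n → ℝ), ∀ I ∈ Sph, ∀ J ∈ Sph, ∀ K ∈ Sph, J ≠ K →
       aff x y I ∈ Ω → aff x y J ∈ Ω → aff x y K ∈ Ω →
       f (aff x y I) =
         (J - K)⁻¹ * (J * f (aff x y J) - K * f (aff x y K)) +
           I * ((J - K)⁻¹ * (f (aff x y J) - f (aff x y K))),
     ∀ (x y : Fin n → ℝ), ∀ I ∈ Sph, ∀ J ∈ Sph, ∀ K ∈ Sph, J ≠ K →
       aff x y I ∈ Ω → aff x y J ∈ Ω → aff x y K ∈ Ω →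
       f (aff x y I) =
         (I - K) * ((J - K)⁻¹ * f (aff x y J)) +
           (I - J) * ((K - J)⁻¹ * f (aff x y K))].TFAE := by
  tfae_have 1 → 3 := fun hf x y I hI J hJ K hK hJK hIΩ hJΩ hKΩ =>
    (hf.hasStemAt ⟨J, hJ, K, hK, hJK, hJΩ, hKΩ⟩).eq_linFormI hI hJ hK hJK hIΩ hJΩ hKΩ
  tfae_have 3 → 2 := fun h => by
    choose F₁ F₂ hF using fun p : (Fin n → ℝ) × (Fin n → ℝ) =>
      hasStemAt_of_eq_linFormI (h p.1 p.2)
    exact ⟨F₁, F₂, fun x y _ => hF (x, y)⟩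
  tfae_have 2 → 1 := fun ⟨F₁, F₂, hF⟩ =>
    ⟨F₁, F₂, fun x y hxy => hF x y (s2_subset_s1 hxy.1)⟩
  tfae_have 3 → 4 := fun h x y I hI J hJ K hK hJK hIΩ hJΩ hKΩ =>
    (h x y I hI J hJ K hK hJK hIΩ hJΩ hKΩ).trans (linFormI_eq_linFormF hJ hK _ _ _)
  tfae_have 4 → 3 := fun h x y I hI J hJ K hK hJK hIΩ hJΩ hKΩ =>
    (h x y I hI J hJ K hK hJK hIΩ hJΩ hKΩ).trans (linFormI_eq_linFormF hJ hK _ _ _).symm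
  tfae_finish

/-- Equivalent characterizations of slice functions on a subset
`Ω` of the quadratic cone `𝕆ₛⁿ`: (i) slice function; (ii) stem-function form on
`Ω_{s₁}`; (iii) linear form for `I`; (iv) linear form for `f`. -/
theorem slice_function_tfae (n : ℕ) (hn : 1 ≤ n) (Ω : Set (Fin n → Oct))
    (hΩ : Ω ⊆ cone n) (f : (Fin n → Oct) → Oct) :
    [IsSliceFun n Ω f,
     ∃ F₁ F₂ : (Fin n → ℝ) × (Fin n → ℝ) → Oct,
       ∀ x y : Fin n → ℝ, (x, y) ∈ s1 Ω → ∀ I ∈ Sph, aff x y I ∈ Ω →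
         f (aff x y I) = F₁ (x, y) + I * F₂ (x, y),
     ∀ (x y : Fin n → ℝ), ∀ I ∈ Sph, ∀ J ∈ Sph, ∀ K ∈ Sph, J ≠ K →
       aff x y I ∈ Ω → aff x y J ∈ Ω → aff x y K ∈ Ω →
       f (aff x y I) =
         (J - K)⁻¹ * (J * f (aff x y J) - K * f (aff x y K)) +
           I * ((J - K)⁻¹ * (f (aff x y J) - f (aff x y K))),
     ∀ (x y : Fin n → ℝ), ∀ I ∈ Sph, ∀ J ∈ Sph, ∀ K ∈ Sph, J ≠ K →
       aff x y I ∈ Ω → aff x y J ∈ Ω → aff x y K ∈ Ω →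
       f (aff x y I) =
         (I - K) * ((J - K)⁻¹ * f (aff x y J)) +
           (I - J) * ((K - J)⁻¹ * f (aff x y K))].TFAE :=
  slice_function_tfae_general n Ω f

end
end

section
/- Let n ≥ 1, Ω ⊆ 𝕆_sⁿ and let f : Ω → 𝕆 be a slice function. Then for all x,y ∈ ℝⁿ and all I,J ∈ 𝕊 such that x+yI, x+yJ and x−yJ all lie in Ω, f(x+yI) = (1/2)·(f(x+yJ) + f(x−yJ)) − (1/2)·I·(J·(f(x+yJ) − f(x−yJ))), where the products are octonion products with the parenthesization written. -/
/-! Octonions via the Cayley–Dickson construction on the quaternions,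
the n-dimensional quadratic cone, the slice topology, and slice regularity. -/

noncomputable section
open Quaternion Topology

open Oct

namespace OctAux
open Oct

lemma c1_mul (p q : Oct) : c1 (p * q) = c1 p * c1 q - star (c2 q) * c2 p := rfl
lemma c2_mul (p q : Oct) : c2 (p * q) = c2 q * c1 p + c2 p * star (c1 q) := rfl
lemma c1_add (p q : Oct) : c1 (p + q) = c1 p + c1 q := rfl
lemma c2_add (p q : Oct) : c2 (p + q) = c2 p + c2 q := rfl
lemma c1_neg (p : Oct) : c1 (-p) = -c1 p := rfl
lemma c2_neg (p : Oct) : c2 (-p) = -c2 p := rfl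
lemma c1_zero : c1 (0 : Oct) = 0 := rfl
lemma c2_zero : c2 (0 : Oct) = 0 := rfl
lemma c1_one : c1 (1 : Oct) = 1 := rfl
lemma c2_one : c2 (1 : Oct) = 0 := rfl

lemma oext {p q : Oct} (h1 : c1 p = c1 q) (h2 : c2 p = c2 q) : p = q := by
  have : (WithLp.equiv 2 (ℍ × ℍ) p) = (WithLp.equiv 2 (ℍ × ℍ) q) := Prod.ext h1 h2
  exact (WithLp.equiv 2 (ℍ × ℍ)).injective this

lemma omul_add (p q r : Oct) : p * (q + r) = p * q + p * r := by
  apply oext <;> simp [c1_mul, c2_mul, c1_add, c2_add, mul_add, add_mul, star_add] <;> abel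

lemma omul_neg (p q : Oct) : p * (-q) = -(p * q) := by
  apply oext <;> simp [c1_mul, c2_mul, c1_neg, c2_neg] <;> abel

lemma neg_omul (p q : Oct) : (-p) * q = -(p * q) := by
  apply oext <;> simp [c1_mul, c2_mul, c1_neg, c2_neg] <;> abel

lemma omul_zero (p : Oct) : p * 0 = 0 := by
  apply oext <;> simp [c1_mul, c2_mul, c1_zero, c2_zero]

lemma sph_c1 {J : Oct} (h : J ∈ Sph) :
    c1 J * c1 J - star (c2 J) * c2 J = -1 := by
  have := congrArg c1 h
  simpa [c1_mul, c1_neg, c1_one] using this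

lemma sph_c2 {J : Oct} (h : J ∈ Sph) :
    c2 J * c1 J + c2 J * star (c1 J) = 0 := by
  have := congrArg c2 h
  simpa [c2_mul, c2_neg, c2_one] using this

/-- Key: for an imaginary unit `J`, `J (J w) = -w`. -/
lemma sph_sq {J : Oct} (h : J ∈ Sph) (w : Oct) : J * (J * w) = -w := by
  set a := c1 J with ha
  set b := c2 J with hb
  have h1 : a * a - star b * b = -1 := sph_c1 h
  have h2 : b * (a + star a) = 0 := by
    have := sph_c2 h; rw [mul_add]; exact this
  rcases mul_eq_zero.mp h2 with hb0 | ha0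
  · -- b = 0, so a * a = -1
    have haa : a * a = -1 := by simpa [hb0] using h1
    apply oext
    · show a * (a * c1 w - star (c2 w) * b) - star (c2 w * a + b * star (c1 w)) * b = c1 (-w)
      rw [c1_neg, hb0]
      simp only [mul_zero, zero_mul, sub_zero, add_zero]
      rw [← mul_assoc, haa, neg_one_mul]
    · show (c2 w * a + b * star (c1 w)) * a + b * star (a * c1 w - star (c2 w) * b) = c2 (-w)
      rw [c2_neg, hb0]
      simp only [zero_mul, add_zero, mul_zero, sub_zero]
      rw [mul_assoc, haa, mul_neg_one]
  · -- a + star a = 0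
    have hsa : star a = -a := eq_neg_of_add_eq_zero_right ha0
    have haa : a * a = -((Quaternion.normSq a : ℝ) : ℍ) := by
      have hh := Quaternion.self_mul_star (a := a)
      rw [hsa, mul_neg, neg_eq_iff_eq_neg] at hh
      exact hh
    have hbb : star b * b = ((Quaternion.normSq b : ℝ) : ℍ) := Quaternion.star_mul_self b
    have hbb' : b * star b = ((Quaternion.normSq b : ℝ) : ℍ) := Quaternion.self_mul_star b
    have hsum : ((Quaternion.normSq a : ℝ) : ℍ) + ((Quaternion.normSq b : ℝ) : ℍ) = 1 := by
      rw [haa, hbb, sub_eq_add_neg, ← neg_add] at h1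
      exact neg_inj.mp h1
    apply oext
    · show a * (a * c1 w - star (c2 w) * b) - star (c2 w * a + b * star (c1 w)) * b = c1 (-w)
      rw [c1_neg]
      have step1 : a * (a * c1 w - star (c2 w) * b) - star (c2 w * a + b * star (c1 w)) * b
          = (a * a) * c1 w - c1 w * (star b * b)
            - (a * (star (c2 w) * b) + star a * (star (c2 w) * b)) := by
        simp only [star_add, star_mul, star_star, mul_add, mul_sub, sub_mul, add_mul, mul_assoc]
        abel
      rw [step1, hsa, neg_mul]
      have step2 : (a * a) * c1 w - c1 w * (star b * b)
          - (a * (star (c2 w) * b) + -(a * (star (c2 w) * b)))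
          = (a * a) * c1 w - c1 w * (star b * b) := by abel
      rw [step2, haa, hbb, ← Quaternion.coe_commutes, neg_mul,
        show -(((Quaternion.normSq a : ℝ) : ℍ) * c1 w) - ((Quaternion.normSq b : ℝ) : ℍ) * c1 w
            = -((((Quaternion.normSq a : ℝ) : ℍ) + ((Quaternion.normSq b : ℝ) : ℍ)) * c1 w) by
          rw [add_mul]; abel, hsum, one_mul]
    · show (c2 w * a + b * star (c1 w)) * a + b * star (a * c1 w - star (c2 w) * b) = c2 (-w)
      rw [c2_neg]
      have step1 : (c2 w * a + b * star (c1 w)) * a + b * star (a * c1 w - star (c2 w) * b)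
          = c2 w * (a * a) - (b * star b) * c2 w
            + (b * (star (c1 w) * a) + b * (star (c1 w) * star a)) := by
        simp only [star_sub, star_mul, star_star, mul_add, mul_sub, sub_mul, add_mul, mul_assoc]
        abel
      rw [step1, hsa, mul_neg, mul_neg]
      have step2 : c2 w * (a * a) - (b * star b) * c2 w
          + (b * (star (c1 w) * a) + -(b * (star (c1 w) * a)))
          = c2 w * (a * a) - (b * star b) * c2 w := by abel
      rw [step2, haa, hbb', mul_neg, ← Quaternion.coe_commutes,
        show -(((Quaternion.normSq a : ℝ) : ℍ) * c2 w) - ((Quaternion.normSq b : ℝ) : ℍ) * c2 w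
            = -((((Quaternion.normSq a : ℝ) : ℍ) + ((Quaternion.normSq b : ℝ) : ℍ)) * c2 w) by
          rw [add_mul]; abel, hsum, one_mul]

lemma sph_ne_zero {J : Oct} (h : J ∈ Sph) : J ≠ 0 := by
  intro h0
  have h1 : (0 : Oct) * 0 = -1 := by rw [← h0]; exact h
  have := congrArg c1 h1
  simp [c1_mul, c1_neg, c1_one, c1_zero, c2_zero] at this

lemma neg_mem_sph {J : Oct} (h : J ∈ Sph) : -J ∈ Sph := by
  show (-J) * (-J) = -1
  rw [neg_omul, omul_neg, neg_neg]; exact h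

lemma sph_ne_neg {J : Oct} (h : J ∈ Sph) : J ≠ -J := by
  intro he
  apply sph_ne_zero h
  have h2 : (2 : ℝ) • J = 0 := by
    rw [two_smul]; nth_rewrite 2 [he]; simp
  simpa using (smul_eq_zero.mp h2).resolve_left (by norm_num)

lemma half_add (w : Oct) : ((1 : ℝ) / 2) • (w + w) = w := by
  rw [← two_smul ℝ w, smul_smul]; norm_num

/-- The purely algebraic representation formula. -/
lemma rep_alg (I J F₁ F₂ : Oct) (hJ : ∀ w, J * (J * w) = -w) :
    F₁ + I * F₂ =
      ((1 : ℝ) / 2) • ((F₁ + J * F₂) + (F₁ + (-J) * F₂)) -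
        ((1 : ℝ) / 2) • (I * (J * ((F₁ + J * F₂) - (F₁ + (-J) * F₂)))) := by
  have h1 : (F₁ + J * F₂) + (F₁ + (-J) * F₂) = F₁ + F₁ := by
    rw [neg_omul]; abel
  have h2 : (F₁ + J * F₂) - (F₁ + (-J) * F₂) = J * F₂ + J * F₂ := by
    rw [neg_omul]; abel
  rw [h1, h2, half_add, omul_add J (J * F₂) (J * F₂), hJ F₂,
    omul_add I (-F₂) (-F₂)]
  simp only [omul_neg]
  rw [← neg_add, smul_neg, half_add, sub_neg_eq_add]


/-- Variant of `rep_alg` for the lower half-space case. -/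
lemma rep_alg' (I J F₁ F₂ : Oct) (hJ : ∀ w, J * (J * w) = -w) :
    F₁ + (-I) * F₂ =
      ((1 : ℝ) / 2) • ((F₁ + (-J) * F₂) + (F₁ + J * F₂)) -
        ((1 : ℝ) / 2) • (I * (J * ((F₁ + (-J) * F₂) - (F₁ + J * F₂)))) := by
  have h1 : (F₁ + (-J) * F₂) + (F₁ + J * F₂) = F₁ + F₁ := by
    rw [neg_omul]; abel
  have h2 : (F₁ + (-J) * F₂) - (F₁ + J * F₂) = -(J * F₂) + -(J * F₂) := by
    rw [neg_omul]; abel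
  rw [h1, h2, half_add,
    show J * (-(J * F₂) + -(J * F₂)) = F₂ + F₂ by
      rw [omul_add, omul_neg, hJ, neg_neg],
    omul_add I F₂ F₂, half_add, neg_omul]
  abel

lemma aff_neg {n : ℕ} (x y : Fin n → ℝ) (J : Oct) : aff x (-y) J = aff x y (-J) := by
  funext m; simp [aff, smul_neg]

lemma aff_zero {n : ℕ} (x : Fin n → ℝ) (I J : Oct) : aff x 0 I = aff x 0 J := by
  funext m; simp [aff]

lemma pos_dichotomy {n : ℕ} (x y : Fin n → ℝ) (hy : y ≠ 0) :
    (x, y) ∈ pos2n n ∨ (x, -y) ∈ pos2n n := by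
  have hne : ∃ m, y m ≠ 0 := by
    by_contra hc; push_neg at hc; exact hy (funext hc)
  set S : Finset (Fin n) := Finset.univ.filter (fun m => y m ≠ 0) with hS
  have hSne : S.Nonempty := by
    obtain ⟨m, hm⟩ := hne; exact ⟨m, by simp [hS, hm]⟩
  set m := S.min' hSne with hm
  have hym : y m ≠ 0 := by
    have := S.min'_mem hSne; simpa [hS] using this
  have hlt : ∀ k, k < m → y k = 0 := by
    intro k hk
    by_contra hk0
    exact absurd (S.min'_le k (by simp [hS, hk0])) (not_le.mpr hk)
  rcases lt_or_gt_of_ne hym.symm with hpos | hneg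
  · exact Or.inl (Or.inr ⟨m, hpos, hlt⟩)
  · refine Or.inr (Or.inr ⟨m, ?_, fun k hk => ?_⟩)
    · simpa using hneg
    · simp [hlt k hk]

end OctAux

/-- Representation formula for slice functions:
`f(x+yI) = ½(f(x+yJ) + f(x−yJ)) − ½ I (J (f(x+yJ) − f(x−yJ)))`. -/
theorem slice_function_representation (n : ℕ) (hn : 1 ≤ n) (Ω : Set (Fin n → Oct))
    (hΩ : Ω ⊆ cone n) (f : (Fin n → Oct) → Oct) (hf : IsSliceFun n Ω f) :
    ∀ (x y : Fin n → ℝ), ∀ I ∈ Sph, ∀ J ∈ Sph,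
      aff x y I ∈ Ω → aff x y J ∈ Ω → aff x (-y) J ∈ Ω →
      f (aff x y I) =
        ((1 : ℝ) / 2) • (f (aff x y J) + f (aff x (-y) J)) -
          ((1 : ℝ) / 2) • (I * (J * (f (aff x y J) - f (aff x (-y) J)))) := by
  intro x y I hI J hJ hxyI hxyJ hxnyJ
  obtain ⟨F₁, F₂, hF⟩ := hf
  by_cases hy : y = 0
  · subst hy
    rw [show aff x (-(0 : Fin n → ℝ)) J = aff x 0 J by rw [neg_zero],
      OctAux.aff_zero x I J]
    rw [sub_self, OctAux.omul_zero, OctAux.omul_zero, smul_zero, sub_zero, OctAux.half_add]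
  · rcases OctAux.pos_dichotomy x y hy with hpos | hpos
    · -- (x, y) is in the upper half-space
      have hyJ' : aff x y (-J) ∈ Ω := by rw [← OctAux.aff_neg]; exact hxnyJ
      have hmem : (x, y) ∈ s2 Ω ∩ pos2n n :=
        ⟨⟨J, hJ, -J, OctAux.neg_mem_sph hJ, OctAux.sph_ne_neg hJ, hxyJ, hyJ'⟩, hpos⟩
      have e1 := hF x y hmem I hI hxyI
      have e2 := hF x y hmem J hJ hxyJ
      have e3 := hF x y hmem (-J) (OctAux.neg_mem_sph hJ) hyJ'
      rw [e1, e2, OctAux.aff_neg, e3]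
      exact OctAux.rep_alg I J _ _ (OctAux.sph_sq hJ)
    · -- (x, -y) is in the upper half-space
      have hI' : aff x (-y) (-I) ∈ Ω := by
        rw [← OctAux.aff_neg, neg_neg]; exact hxyI
      have hJ' : aff x (-y) (-J) ∈ Ω := by
        rw [← OctAux.aff_neg, neg_neg]; exact hxyJ
      have hmem : (x, -y) ∈ s2 Ω ∩ pos2n n :=
        ⟨⟨J, hJ, -J, OctAux.neg_mem_sph hJ, OctAux.sph_ne_neg hJ, hxnyJ, hJ'⟩, hpos⟩
      have e1 := hF x (-y) hmem (-I) (OctAux.neg_mem_sph hI) hI'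
      have e2 := hF x (-y) hmem (-J) (OctAux.neg_mem_sph hJ) hJ'
      have e3 := hF x (-y) hmem J hJ hxnyJ
      have exI : aff x y I = aff x (-y) (-I) := by rw [OctAux.aff_neg, neg_neg]
      have exJ : aff x y J = aff x (-y) (-J) := by rw [OctAux.aff_neg, neg_neg]
      rw [exI, exJ, e1, e2, e3]
      exact OctAux.rep_alg' I J _ _ (OctAux.sph_sq hJ)

end
end

section
/- Let n ≥ 1 and let Ω ⊆ 𝕆_sⁿ be a real-connected slice-domain. Then for every I ∈ 𝕊 the slice Ω_I := Ω ∩ ℂ_Iⁿ is an open, preconnected subset of ℂ_Iⁿ (i.e. open, and connected whenever nonempty). -/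
/-! Octonions via the Cayley–Dickson construction on the quaternions,
the n-dimensional quadratic cone, the slice topology, and slice regularity. -/

noncomputable section
open Quaternion Topology

open Oct

/-! ### Auxiliary lemmas for Statement 7 -/

section Aux7

open Oct

lemma octExt (p q : Oct) : p = q ↔ c1 p = c1 q ∧ c2 p = c2 q := by
  constructor
  · rintro rfl; exact ⟨rfl, rfl⟩
  · rintro ⟨h1, h2⟩
    exact (WithLp.equiv 2 (ℍ × ℍ)).injective (Prod.ext h1 h2)

lemma octSmulMul (s : ℝ) (p q : Oct) : (s • p) * q = s • (p * q) := by
  rw [octExt]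
  constructor
  · show (s • c1 p) * c1 q - star (c2 q) * (s • c2 p) = s • (c1 p * c1 q - star (c2 q) * c2 p)
    rw [smul_mul_assoc, mul_smul_comm, smul_sub]
  · show c2 q * (s • c1 p) + (s • c2 p) * star (c1 q) = s • (c2 q * c1 p + c2 p * star (c1 q))
    rw [smul_mul_assoc, mul_smul_comm, smul_add]

lemma octMulSmul (s : ℝ) (p q : Oct) : p * (s • q) = s • (p * q) := by
  rw [octExt]
  constructor
  · show c1 p * (s • c1 q) - star (s • c2 q) * c2 p = s • (c1 p * c1 q - star (c2 q) * c2 p)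
    rw [Quaternion.star_smul, smul_mul_assoc, mul_smul_comm, smul_sub]
  · show (s • c2 q) * c1 p + c2 p * star (s • c1 q) = s • (c2 q * c1 p + c2 p * star (c1 q))
    rw [Quaternion.star_smul, smul_mul_assoc, mul_smul_comm, smul_add]

lemma octAddMul (p q r : Oct) : (p + q) * r = p * r + q * r := by
  rw [octExt]
  constructor
  · show (c1 p + c1 q) * c1 r - star (c2 r) * (c2 p + c2 q)
      = (c1 p * c1 r - star (c2 r) * c2 p) + (c1 q * c1 r - star (c2 r) * c2 q)
    noncomm_ring
  · show c2 r * (c1 p + c1 q) + (c2 p + c2 q) * star (c1 r)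
      = (c2 r * c1 p + c2 p * star (c1 r)) + (c2 r * c1 q + c2 q * star (c1 r))
    noncomm_ring

lemma octMulAdd (p q r : Oct) : p * (q + r) = p * q + p * r := by
  rw [octExt]
  constructor
  · show c1 p * (c1 q + c1 r) - star (c2 q + c2 r) * c2 p
      = (c1 p * c1 q - star (c2 q) * c2 p) + (c1 p * c1 r - star (c2 r) * c2 p)
    rw [star_add]; noncomm_ring
  · show (c2 q + c2 r) * c1 p + c2 p * star (c1 q + c1 r)
      = (c2 q * c1 p + c2 p * star (c1 q)) + (c2 r * c1 p + c2 p * star (c1 r))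
    rw [star_add]; noncomm_ring

lemma octOneMul (p : Oct) : (1 : Oct) * p = p := by
  rw [octExt]
  refine ⟨?_, ?_⟩
  · show (1:ℍ) * c1 p - star (c2 p) * 0 = c1 p
    simp
  · show c2 p * (1:ℍ) + 0 * star (c1 p) = c2 p
    simp

lemma octMulOne (p : Oct) : p * (1 : Oct) = p := by
  rw [octExt]
  refine ⟨?_, ?_⟩
  · show c1 p * (1:ℍ) - star (0:ℍ) * c2 p = c1 p
    simp
  · show (0:ℍ) * c1 p + c2 p * star (1:ℍ) = c2 p
    simp

lemma octNegOneSmulOne : (-1 : Oct) = (-1 : ℝ) • (1:Oct) := by simp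

lemma octSmulOneMulSmulOne (s t : ℝ) : (s • (1:Oct)) * (t • (1:Oct)) = (s*t) • 1 := by
  rw [octSmulMul, octMulSmul, octOneMul, smul_smul, mul_comm]

lemma octSmulOneInj {s t : ℝ} (h : s • (1:Oct) = t • (1:Oct)) : s = t := by
  have h1 : c1 (s • (1:Oct)) = c1 (t • (1:Oct)) := by rw [h]
  have : s • (1:ℍ) = t • (1:ℍ) := h1
  simpa [Quaternion.ext_iff] using this

lemma octSphIndep {I : Oct} (hI : I ∈ Sph) {a b : ℝ}
    (h : a • (1:Oct) + b • I = 0) : a = 0 ∧ b = 0 := by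
  rcases eq_or_ne b 0 with hb | hb
  · subst hb
    simp only [zero_smul, add_zero] at h
    have := octSmulOneInj (h.trans (zero_smul ℝ (1:Oct)).symm)
    exact ⟨this, rfl⟩
  · exfalso
    have hIval : I = (b⁻¹ * (-a)) • (1:Oct) := by
      have h2 : b • I = (-a) • (1:Oct) := by
        rw [neg_smul, eq_neg_iff_add_eq_zero, add_comm]; exact h
      have := congrArg (fun z => (b⁻¹ : ℝ) • z) h2
      simp only [smul_smul, inv_mul_cancel₀ hb, one_smul] at this
      exact this
    set s := b⁻¹ * (-a)
    have : (s * s) • (1:Oct) = -1 := by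
      rw [← octSmulOneMulSmulOne, ← hIval]; exact hI
    rw [octNegOneSmulOne] at this
    have := octSmulOneInj this
    nlinarith [mul_self_nonneg s]

lemma octSphSpan {I J : Oct} (hI : I ∈ Sph) (hJ : J ∈ Sph) {a b : ℝ}
    (h : I = a • (1:Oct) + b • J) : I = J ∨ I = -J := by
  have hsq : I * I = (a*a - b*b) • (1:Oct) + (2*(a*b)) • J := by
    have hJ' : J * J = -1 := hJ
    rw [h]
    simp only [octAddMul, octMulAdd, octSmulMul, octMulSmul, octOneMul, octMulOne, hJ',
      octNegOneSmulOne]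
    module
  have h0 : (a*a - b*b + 1) • (1:Oct) + (2*(a*b)) • J = 0 := by
    have hA : (a*a - b*b) • (1:Oct) + (2*(a*b)) • J = (-1:ℝ) • (1:Oct) := by
      rw [← hsq, hI, octNegOneSmulOne]
    calc (a*a - b*b + 1) • (1:Oct) + (2*(a*b)) • J
        = ((a*a - b*b) • (1:Oct) + (2*(a*b)) • J) + (1:ℝ) • (1:Oct) := by module
      _ = (-1:ℝ) • (1:Oct) + (1:ℝ) • (1:Oct) := by rw [hA]
      _ = 0 := by module
  obtain ⟨h1, h2⟩ := octSphIndep hJ h0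
  have ha : a = 0 := by
    rcases mul_eq_zero.1 (by linarith : a * b = 0) with h' | h'
    · exact h'
    · exfalso; rw [h'] at h1; nlinarith [mul_self_nonneg a]
  subst ha
  have hb : b * b = 1 := by nlinarith
  rcases mul_self_eq_one_iff.1 hb with hb1 | hb1 <;> subst hb1
  · left; rw [h]; module
  · right; rw [h]; module

lemma octNegMemSph {I : Oct} (hI : I ∈ Sph) : -I ∈ Sph := by
  have hI' : I * I = -1 := hI
  show (-I) * (-I) = -1
  have : (-I) = (-1 : ℝ) • I := by module
  rw [this, octSmulMul, octMulSmul, smul_smul, hI']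
  norm_num

lemma affInj {n : ℕ} {I : Oct} (hI : I ∈ Sph) {x y x' y' : Fin n → ℝ}
    (h : aff x y I = aff x' y' I) : x = x' ∧ y = y' := by
  have key : ∀ m, x m = x' m ∧ y m = y' m := by
    intro m
    have hc := congrFun h m
    simp only [aff] at hc
    have h0 : (x m - x' m) • (1:Oct) + (y m - y' m) • I = 0 := by
      calc (x m - x' m) • (1:Oct) + (y m - y' m) • I
          = (x m • (1:Oct) + y m • I) - (x' m • (1:Oct) + y' m • I) := by module
        _ = 0 := by rw [hc, sub_self]
    obtain ⟨h1, h2⟩ := octSphIndep hI h0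
    exact ⟨sub_eq_zero.1 h1, sub_eq_zero.1 h2⟩
  exact ⟨funext fun m => (key m).1, funext fun m => (key m).2⟩

lemma affNeg {n : ℕ} (x y : Fin n → ℝ) (I : Oct) : aff x y (-I) = aff x (-y) I := by
  funext m
  simp only [aff, Pi.neg_apply, smul_neg, neg_smul]

lemma affZero {n : ℕ} (x : Fin n → ℝ) (I : Oct) : aff x 0 I = ofRealn x := by
  funext m
  simp only [aff, ofRealn, Pi.zero_apply, zero_smul, add_zero]

lemma crossSlice {n : ℕ} {I J : Oct} (hI : I ∈ Sph) (hJ : J ∈ Sph)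
    {x y x' y' : Fin n → ℝ} (h : aff x y J = aff x' y' I)
    {m : Fin n} (hm : y' m ≠ 0) : J = I ∨ J = -I := by
  have hc := congrFun h m
  simp only [aff] at hc
  have e1 : y' m • I = (x m • (1:Oct) + y m • J) - x' m • (1:Oct) := by
    calc y' m • I = (x' m • (1:Oct) + y' m • I) - x' m • (1:Oct) := by module
      _ = (x m • (1:Oct) + y m • J) - x' m • (1:Oct) := by rw [hc]
  have e2 : I = ((y' m)⁻¹ * (x m - x' m)) • (1:Oct) + ((y' m)⁻¹ * (y m)) • J := by
    have e3 : I = (y' m)⁻¹ • (y' m • I) := by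
      rw [smul_smul, inv_mul_cancel₀ hm, one_smul]
    rw [e3, e1]; module
  rcases octSphSpan hI hJ e2 with h' | h'
  · exact Or.inl h'.symm
  · right; rw [h', neg_neg]

end Aux7

/-- Every slice of a real-connected slice-domain is an open,
preconnected subset of `ℂ_Iⁿ` (read through the parametrization
`(x,y) ↦ x + yI` of `ℂ_Iⁿ`). -/
theorem sliceDomain_slices_open_preconnected (n : ℕ) (hn : 1 ≤ n)
    (Ω : Set (Fin n → Oct)) (hΩ : SliceDomain n Ω) (hrc : RealConnected n Ω) :
    ∀ I ∈ Sph,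
      IsOpen {p : (Fin n → ℝ) × (Fin n → ℝ) | aff p.1 p.2 I ∈ Ω} ∧
      IsPreconnected {p : (Fin n → ℝ) × (Fin n → ℝ) | aff p.1 p.2 I ∈ Ω} := by
  classical
  obtain ⟨⟨hsub, hopen⟩, hconn⟩ := hΩ
  have hAopen : ∀ J ∈ Sph,
      IsOpen {p : (Fin n → ℝ) × (Fin n → ℝ) | aff p.1 p.2 J ∈ Ω} := by
    intro J hJ
    have h1 : ∀ K : Sph, IsOpen[TopologicalSpace.coinduced
        (fun p : (Fin n → ℝ) × (Fin n → ℝ) => aff p.1 p.2 K.1) inferInstance] Ω :=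
      isOpen_iSup_iff.1 hopen
    exact isOpen_coinduced.1 (h1 ⟨J, hJ⟩)
  intro I hI
  refine ⟨hAopen I hI, ?_⟩
  set A : Set ((Fin n → ℝ) × (Fin n → ℝ)) := {p | aff p.1 p.2 I ∈ Ω} with hA
  -- the real points of the slice
  set R : Set ((Fin n → ℝ) × (Fin n → ℝ)) :=
    (fun x : Fin n → ℝ => (x, (0 : Fin n → ℝ))) '' {x | ofRealn x ∈ Ω} with hR
  have hRA : ∀ p : (Fin n → ℝ) × (Fin n → ℝ), p ∈ A → p.2 = 0 → p ∈ R := by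
    rintro ⟨x, y⟩ hp hy
    obtain rfl : y = 0 := hy
    refine ⟨x, ?_, rfl⟩
    have : aff x 0 I ∈ Ω := hp
    rwa [affZero] at this
  have hRpre : IsPreconnected R :=
    hrc.image _ (Continuous.continuousOn (by fun_prop))
  -- the key step
  have key : ∀ U V : Set ((Fin n → ℝ) × (Fin n → ℝ)), IsOpen U → IsOpen V →
      U ∪ V = A → U ∩ V = ∅ → U.Nonempty → V.Nonempty →
      (∀ p ∈ V, p.2 ≠ 0) → False := by
    intro U V hUo hVo hUV hdis hUne hVne hVreal
    set T : Set (Fin n → Oct) := {q | ∃ p ∈ V, q = aff p.1 p.2 I} with hT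
    have hpreT : ∀ J ∈ Sph,
        (fun p : (Fin n → ℝ) × (Fin n → ℝ) => aff p.1 p.2 J) ⁻¹' T
          = if J = I then V else if J = -I then (fun p : (Fin n → ℝ) × (Fin n → ℝ) =>
              (p.1, -p.2)) ⁻¹' V else ∅ := by
      intro J hJ
      by_cases hJI : J = I
      · subst hJI
        simp only [if_pos rfl]
        ext p
        constructor
        · rintro ⟨p', hp', heq⟩
          obtain ⟨hx, hy⟩ := affInj hI heq
          have : p = p' := Prod.ext hx hy
          rwa [this]
        · intro hp
          exact ⟨p, hp, rfl⟩
      · rw [if_neg hJI]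
        by_cases hJnI : J = -I
        · rw [if_pos hJnI]
          subst hJnI
          ext p
          constructor
          · rintro ⟨p', hp', heq⟩
            replace heq : aff p.1 p.2 (-I) = aff p'.1 p'.2 I := heq
            rw [affNeg] at heq
            obtain ⟨hx, hy⟩ := affInj hI heq
            have : (p.1, -p.2) = p' := Prod.ext hx hy
            show (p.1, -p.2) ∈ V
            rwa [this]
          · intro hp
            exact ⟨(p.1, -p.2), hp, (affNeg p.1 p.2 I).symm ▸ rfl⟩
        · rw [if_neg hJnI]
          ext p
          simp only [Set.mem_preimage, Set.mem_empty_iff_false, iff_false]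
          rintro ⟨p', hp', heq⟩
          have hy : p'.2 ≠ 0 := hVreal _ hp'
          obtain ⟨m, hm⟩ := Function.ne_iff.1 hy
          rcases crossSlice hI hJ heq hm with h' | h'
          · exact hJI h'
          · exact hJnI h'
    have hTopen : IsOpen[τs n] T := by
      refine isOpen_iSup_iff.2 ?_
      rintro ⟨J, hJ⟩
      rw [isOpen_coinduced, hpreT J hJ]
      by_cases hJI : J = I
      · rw [if_pos hJI]; exact hVo
      · rw [if_neg hJI]
        by_cases hJnI : J = -I
        · rw [if_pos hJnI]
          exact hVo.preimage (continuous_fst.prodMk continuous_snd.neg)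
        · rw [if_neg hJnI]; exact isOpen_empty
    have hUeq : A \ V = U := by
      rw [← hUV]
      ext p
      simp only [Set.mem_diff, Set.mem_union]
      constructor
      · rintro ⟨h1 | h1, h2⟩
        · exact h1
        · exact absurd h1 h2
      · intro h1
        refine ⟨Or.inl h1, fun h2 => ?_⟩
        have : p ∈ U ∩ V := ⟨h1, h2⟩
        rw [hdis] at this
        exact this
    have hCopen : IsOpen[τs n] (Ω \ T) := by
      refine isOpen_iSup_iff.2 ?_
      rintro ⟨J, hJ⟩
      rw [isOpen_coinduced, Set.preimage_diff, hpreT J hJ]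
      by_cases hJI : J = I
      · rw [if_pos hJI]
        subst hJI
        have : (fun p : (Fin n → ℝ) × (Fin n → ℝ) => aff p.1 p.2 J) ⁻¹' Ω \ V = U := hUeq
        rw [this]
        exact hUo
      · rw [if_neg hJI]
        by_cases hJnI : J = -I
        · rw [if_pos hJnI]
          subst hJnI
          have hpre : (fun p : (Fin n → ℝ) × (Fin n → ℝ) => aff p.1 p.2 (-I)) ⁻¹' Ω
              = (fun p : (Fin n → ℝ) × (Fin n → ℝ) => (p.1, -p.2)) ⁻¹' A := by
            ext p
            show aff p.1 p.2 (-I) ∈ Ω ↔ aff p.1 (-p.2) I ∈ Ω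
            rw [affNeg]
          rw [hpre, ← Set.preimage_diff, hUeq]
          exact hUo.preimage (continuous_fst.prodMk continuous_snd.neg)
        · rw [if_neg hJnI, Set.diff_empty]
          exact hAopen J hJ
    -- apply slice-connectedness of Ω
    obtain ⟨p₀, hp₀⟩ := hVne
    obtain ⟨p₁, hp₁⟩ := hUne
    have hp₀A : p₀ ∈ A := by rw [← hUV]; exact Or.inr hp₀
    have hp₁A : p₁ ∈ A := by rw [← hUV]; exact Or.inl hp₁
    have hsub1 : Ω ⊆ T ∪ (Ω \ T) := by
      intro q hq
      by_cases hqT : q ∈ T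
      · exact Or.inl hqT
      · exact Or.inr ⟨hq, hqT⟩
    have hne1 : (Ω ∩ T).Nonempty :=
      ⟨aff p₀.1 p₀.2 I, hp₀A, ⟨p₀, hp₀, rfl⟩⟩
    have hne2 : (Ω ∩ (Ω \ T)).Nonempty := by
      refine ⟨aff p₁.1 p₁.2 I, hp₁A, hp₁A, fun hT1 => ?_⟩
      obtain ⟨p', hp', heq⟩ := hT1
      obtain ⟨hx, hy⟩ := affInj hI heq
      have : p₁ = p' := Prod.ext hx hy
      have : p₁ ∈ U ∩ V := ⟨hp₁, this ▸ hp'⟩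
      rw [hdis] at this
      exact this
    have hpc : @IsPreconnected _ (τs n) Ω := hconn.2
    have hfin := hpc T (Ω \ T) hTopen hCopen hsub1 hne1 hne2
    obtain ⟨q, -, hqT, -, hqnT⟩ := hfin
    exact hqnT hqT
  -- conclude preconnectedness of A
  intro u v hu hv hsuv hau hav
  by_contra hcon
  rw [Set.not_nonempty_iff_eq_empty] at hcon
  set U' : Set ((Fin n → ℝ) × (Fin n → ℝ)) := A ∩ u with hU'
  set V' : Set ((Fin n → ℝ) × (Fin n → ℝ)) := A ∩ v with hV'
  have hU'o : IsOpen U' := (hAopen I hI).inter hu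
  have hV'o : IsOpen V' := (hAopen I hI).inter hv
  have hunion : U' ∪ V' = A := by
    rw [hU', hV', ← Set.inter_union_distrib_left]
    exact Set.inter_eq_left.2 hsuv
  have hdisj : U' ∩ V' = ∅ := by
    rw [hU', hV']
    have : A ∩ u ∩ (A ∩ v) ⊆ A ∩ (u ∩ v) := fun p ⟨⟨h1, h2⟩, ⟨h3, h4⟩⟩ => ⟨h1, h2, h4⟩
    rw [hcon] at this
    exact Set.subset_empty_iff.1 this
  have hU'ne : U'.Nonempty := hau
  have hV'ne : V'.Nonempty := hav
  have hRsub : R ⊆ U' ∪ V' := by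
    rw [hunion]
    rintro p ⟨x, hx, rfl⟩
    show aff x 0 I ∈ Ω
    rw [affZero]
    exact hx
  have hdisj' : Disjoint U' V' := Set.disjoint_iff_inter_eq_empty.2 hdisj
  rcases hRpre.subset_or_subset hU'o hV'o hdisj' hRsub with hRU | hRV
  · refine key U' V' hU'o hV'o hunion hdisj hU'ne hV'ne ?_
    intro p hp hp2
    have hpR : p ∈ R := hRA p (by rw [← hunion]; exact Or.inr hp) hp2
    have : p ∈ U' ∩ V' := ⟨hRU hpR, hp⟩
    rw [hdisj] at this
    exact this
  · refine key V' U' hV'o hU'o (Set.union_comm U' V' ▸ hunion)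
      (Set.inter_comm U' V' ▸ hdisj) hV'ne hU'ne ?_
    intro p hp hp2
    have hpR : p ∈ R := hRA p (by rw [← hunion]; exact Or.inl hp) hp2
    have : p ∈ U' ∩ V' := ⟨hp, hRV hpR⟩
    rw [hdisj] at this
    exact this

end
end

section
/- For every n ≥ 1, the topological space (𝕆_sⁿ, τ_s) is connected, path-connected, and locally path-connected. -/
/-! Octonions via the Cayley–Dickson construction on the quaternions,
the n-dimensional quadratic cone, the slice topology, and slice regularity. -/

noncomputable section
open Quaternion Topology

open Oct

/-! The slice topology on `𝕆ₛⁿ` is the quotient topology of `Σ I ∈ 𝕊, ℝⁿ × ℝⁿ` under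
`(I, x, y) ↦ x + yI`. Quotients of locally path-connected spaces are locally path-connected,
and every point of `𝕆ₛⁿ` is joined to `0` by a segment inside its own slice `ℂ_Iⁿ`. -/

lemma mk_zero_one_mem_Sph : Oct.mk 0 1 ∈ Sph := by
  show Oct.mk _ _ = -1
  simp only [Oct.c1, Oct.c2, Oct.mk, Equiv.apply_symm_apply, star_one, mul_one, mul_zero,
    add_zero, zero_sub, star_zero]
  rw [show ((-1, 0) : ℍ × ℍ) = -(1, 0) by simp, WithLp.equiv_symm_apply, WithLp.toLp_neg]
  rfl

lemma aff_zero_zero {n : ℕ} (I : Oct) : aff (0 : Fin n → ℝ) 0 I = 0 := by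
  funext m
  simp [aff]

lemma zero_mem_cone (n : ℕ) : (0 : Fin n → Oct) ∈ cone n :=
  Set.mem_biUnion mk_zero_one_mem_Sph ⟨0, 0, (aff_zero_zero _).symm⟩

theorem induced_val_coinduced_val_comp {X Y : Type*} [t : TopologicalSpace X] {S : Set Y}
    (g : X → S) : (t.coinduced ((↑) ∘ g)).induced ((↑) : S → Y) = t.coinduced g := by
  ext V
  rw [@isOpen_induced_iff _ _ (t.coinduced _), isOpen_coinduced]
  constructor
  · rintro ⟨U, hU, rfl⟩
    exact hU
  · intro hV
    -- Points outside `S` are never hit, so they can be added to `V` for free.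
    refine ⟨(↑) '' V ∪ Sᶜ, ?_, ?_⟩
    · rw [isOpen_coinduced]
      convert hV using 1
      ext x
      simp
    · ext ⟨y, hy⟩
      simp

def sliceParam (n : ℕ) (z : Σ _ : Sph, (Fin n → ℝ) × (Fin n → ℝ)) : cone n :=
  ⟨aff z.2.1 z.2.2 z.1, Set.mem_biUnion z.1.2 ⟨_, _, rfl⟩⟩

lemma τs_eq_coinduced_sliceParam (n : ℕ) :
    τs n = .coinduced ((↑) ∘ sliceParam n) inferInstance := by
  rw [instTopologicalSpaceSigma, coinduced_iSup]
  simp only [coinduced_compose]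
  rfl

lemma induced_τs_cone_eq_coinduced_sliceParam (n : ℕ) :
    (τs n).induced ((↑) : cone n → Fin n → Oct) = .coinduced (sliceParam n) inferInstance := by
  rw [τs_eq_coinduced_sliceParam]
  exact induced_val_coinduced_val_comp _

lemma pathConnectedSpace_coinduced_sliceParam (n : ℕ) :
    @PathConnectedSpace (cone n) (.coinduced (sliceParam n) inferInstance) := by
  let _ : TopologicalSpace (cone n) := .coinduced (sliceParam n) inferInstance
  have hcont : Continuous (sliceParam n) := continuous_coinduced_rng
  have joined_zero : ∀ q : cone n, Joined q ⟨0, zero_mem_cone n⟩ := by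
    rintro ⟨q, hq⟩
    obtain ⟨I, hI, x, y, rfl⟩ := Set.mem_iUnion₂.mp hq
    convert (PathConnectedSpace.joined (x, y) 0).map
      (hcont.comp (continuous_sigmaMk (σ := fun _ : Sph ↦ _) (i := ⟨I, hI⟩))) using 1
    exacts [rfl, Subtype.ext (aff_zero_zero I).symm]
  exact { nonempty := ⟨⟨0, zero_mem_cone n⟩⟩
          joined := fun p q => (joined_zero p).trans (joined_zero q).symm }

theorem cone_connected_pathConnected_locPathConnected_general (n : ℕ) :
    @ConnectedSpace ↥(cone n)
      (TopologicalSpace.induced (Subtype.val : ↥(cone n) → (Fin n → Oct)) (τs n)) ∧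
    @PathConnectedSpace ↥(cone n)
      (TopologicalSpace.induced (Subtype.val : ↥(cone n) → (Fin n → Oct)) (τs n)) ∧
    @LocPathConnectedSpace ↥(cone n)
      (TopologicalSpace.induced (Subtype.val : ↥(cone n) → (Fin n → Oct)) (τs n)) := by
  rw [induced_τs_cone_eq_coinduced_sliceParam]
  have hpath := pathConnectedSpace_coinduced_sliceParam n
  exact ⟨@PathConnectedSpace.connectedSpace _ (_) hpath, hpath,
    LocallyPathConnectedSpace.coinduced _⟩

/-- The quadratic cone `𝕆ₛⁿ` with the slice topology is
connected, path-connected and locally path-connected. -/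
theorem cone_connected_pathConnected_locPathConnected (n : ℕ) (hn : 1 ≤ n) :
    @ConnectedSpace ↥(cone n)
      (TopologicalSpace.induced (Subtype.val : ↥(cone n) → (Fin n → Oct)) (τs n)) ∧
    @PathConnectedSpace ↥(cone n)
      (TopologicalSpace.induced (Subtype.val : ↥(cone n) → (Fin n → Oct)) (τs n)) ∧
    @LocPathConnectedSpace ↥(cone n)
      (TopologicalSpace.induced (Subtype.val : ↥(cone n) → (Fin n → Oct)) (τs n)) :=
  cone_connected_pathConnected_locPathConnected_general n

end
end
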